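/- Let n be a positive integer. If every n×n complex matrix satisfies the Crouzeix inequality, then every non-cyclic (n+1)×(n+1) complex matrix satisfies the Crouzeix inequality. -/

import Mathlib

open scoped ComplexInnerProductSpace

/-- The continuous linear map on Euclidean space induced by a square matrix. -/
noncomputable def matCLM {ι : Type} [Fintype ι] [DecidableEq ι] (A : Matrix ι ι ℂ) :
    EuclideanSpace ℂ ι →L[ℂ] EuclideanSpace ℂ ι :=
  Matrix.toEuclideanCLM (𝕜 := ℂ) A

/-- The numerical range of a square complex matrix. -/
def numRange {ι : Type} [Fintype ι] [DecidableEq ι] (A : Matrix ι ι ℂ) : Set ℂ :=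
  {z | ∃ x : EuclideanSpace ℂ ι, ‖x‖ = 1 ∧ z = ⟪x, matCLM A x⟫}

/-- A square complex matrix satisfies the Crouzeix inequality if for every polynomial `p`,
`‖p(A)‖ ≤ 2 * sup_{z ∈ W(A)} |p(z)|`. -/
def CrouzeixIneq {ι : Type} [Fintype ι] [DecidableEq ι] (A : Matrix ι ι ℂ) : Prop :=
  ∀ p : Polynomial ℂ,
    ‖matCLM (Polynomial.aeval A p)‖ ≤ 2 * ⨆ z ∈ numRange A, ‖Polynomial.eval z p‖

/-- A square matrix is cyclic if some vector `y` has cyclic subspace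
`span {y, Ay, A²y, …}` equal to the whole space. -/
def MatCyclic {ι : Type} [Fintype ι] [DecidableEq ι] (A : Matrix ι ι ℂ) : Prop :=
  ∃ y : ι → ℂ, Submodule.span ℂ (Set.range fun k : ℕ => (A ^ k).mulVec y) = ⊤

/-!
Fix `x`. Since `A` is not cyclic, the cyclic subspace of `x` is proper, so it lies in a
hyperplane `V` (the orthogonal complement of a nonzero vector orthogonal to it). The compression
`B = P_V A|_V` agrees with `A` on all iterates `Aᵏx`, so `p(A)x = p(B)x`, and
`⟪v, Bv⟫ = ⟪v, Av⟫` for `v ∈ V` gives `W(B) ⊆ W(A)`. Identifying `V` with `ℂⁿ` through an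
orthonormal basis, the `n`-dimensional Crouzeix inequality for `B` yields
`‖p(A)x‖ ≤ 2 sup_{W(A)} |p| ‖x‖`.
-/

open Polynomial Module

/-- An empty or unbounded supremum in `ℝ` is `0`, whence both side conditions. -/
theorem Real.biSup_le_biSup_of_subset {α : Type*} {f : α → ℝ} (hf : ∀ a, 0 ≤ f a) {s t : Set α}
    (hst : s ⊆ t) (ht : BddAbove (f '' t)) : ⨆ a ∈ s, f a ≤ ⨆ a ∈ t, f a := by
  have hbdd : BddAbove (⋃ a, Set.range fun _ : a ∈ t => f a) :=
    ht.mono <| Set.iUnion_subset fun a => Set.range_subset_iff.2 fun ha => Set.mem_image_of_mem f ha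
  have h0 : 0 ≤ ⨆ a ∈ t, f a := Real.iSup_nonneg fun a => Real.iSup_nonneg fun _ => hf a
  exact Real.iSup_le (fun a => Real.iSup_le (fun ha => le_ciSup₂ hbdd a (hst ha)) h0) h0

theorem Submodule.exists_le_finrank_eq_of_ne_top {𝕜 E : Type*} [RCLike 𝕜] [NormedAddCommGroup E]
    [InnerProductSpace 𝕜 E] {n : ℕ} (hE : finrank 𝕜 E = n + 1) {K : Submodule 𝕜 E} (hK : K ≠ ⊤) :
    ∃ V : Submodule 𝕜 E, K ≤ V ∧ finrank 𝕜 V = n := by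
  have : FiniteDimensional 𝕜 E := .of_finrank_eq_succ hE
  have : Fact (finrank 𝕜 E = n + 1) := ⟨hE⟩
  obtain ⟨y, hyK, hy⟩ := exists_mem_ne_zero_of_ne_bot (orthogonal_eq_bot_iff.not.2 hK)
  refine ⟨(𝕜 ∙ y)ᗮ, K.le_orthogonal_orthogonal.trans (orthogonal_le ?_),
    finrank_orthogonal_span_singleton hy⟩
  exact (span_singleton_le_iff_mem y _).2 hyK

namespace ContinuousLinearMap

section RCLike

variable {𝕜 E F : Type*} [RCLike 𝕜] [NormedAddCommGroup E] [InnerProductSpace 𝕜 E]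
  [NormedAddCommGroup F] [InnerProductSpace 𝕜 F]

def numericalRange (T : E →L[𝕜] E) : Set 𝕜 :=
  (fun x => inner 𝕜 x (T x)) '' Metric.sphere 0 1

theorem isCompact_numericalRange [FiniteDimensional 𝕜 E] (T : E →L[𝕜] E) :
    IsCompact T.numericalRange :=
  have := FiniteDimensional.proper_rclike 𝕜 E
  (isCompact_sphere 0 1).image (continuous_id.inner T.continuous)

theorem numericalRange_conj (e : E ≃ₗᵢ[𝕜] F) (T : E →L[𝕜] E) :
    (e.toContinuousLinearEquiv.conjContinuousAlgEquiv T).numericalRange = T.numericalRange := by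
  ext z
  constructor
  · rintro ⟨y, hy, rfl⟩
    exact ⟨e.symm y, by simpa using hy, by simp [← e.inner_map_map (e.symm y)]⟩
  · rintro ⟨x, hx, rfl⟩
    exact ⟨e x, by simpa using hx, by simp⟩

theorem norm_conj (e : E ≃ₗᵢ[𝕜] F) (T : E →L[𝕜] E) :
    ‖e.toContinuousLinearEquiv.conjContinuousAlgEquiv T‖ = ‖T‖ := by
  rw [ContinuousLinearEquiv.conjContinuousAlgEquiv_apply]
  exact (opNorm_linearIsometryEquiv_comp e _).trans (opNorm_comp_linearIsometryEquiv T e.symm)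

variable (T : E →L[𝕜] E) (V : Submodule 𝕜 E) [V.HasOrthogonalProjection]

noncomputable def compression : V →L[𝕜] V :=
  V.orthogonalProjectionOnto ∘L T ∘L V.subtypeL

variable {T V}

theorem compression_apply_of_mem {v : V} (hv : T v ∈ V) : (T.compression V v : E) = T v :=
  V.starProjection_eq_self_iff.2 hv

theorem compression_pow_apply {v : V} (hv : ∀ k, (T ^ k) v ∈ V) (k : ℕ) :
    ((T.compression V ^ k) v : E) = (T ^ k) v := by
  induction k with
  | zero => rfl
  | succ k ih =>
    rw [pow_succ', mul_apply_eq_comp, pow_succ', mul_apply_eq_comp, ← ih]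
    exact compression_apply_of_mem (by rw [ih, ← mul_apply_eq_comp, ← pow_succ']; exact hv (k + 1))

theorem compression_aeval_apply {v : V} (hv : ∀ k, (T ^ k) v ∈ V) (p : 𝕜[X]) :
    (aeval (T.compression V) p v : E) = aeval T p v := by
  induction p using Polynomial.induction_on' with
  | add p q hp hq => simp only [map_add, add_apply, Submodule.coe_add, hp, hq]
  | monomial k c =>
    simp only [aeval_monomial, mul_apply_eq_comp, algebraMap_apply, SetLike.val_smul,
      compression_pow_apply hv]

theorem numericalRange_compression_subset :
    (T.compression V).numericalRange ⊆ T.numericalRange := by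
  rintro _ ⟨v, hv, rfl⟩
  exact ⟨v, by simpa using hv, by simp [compression]⟩

end RCLike

variable {E F : Type*} [NormedAddCommGroup E] [InnerProductSpace ℂ E]
  [NormedAddCommGroup F] [InnerProductSpace ℂ F]

def CrouzeixIneq (T : E →L[ℂ] E) : Prop :=
  ∀ p : ℂ[X], ‖aeval T p‖ ≤ 2 * ⨆ z ∈ T.numericalRange, ‖p.eval z‖

theorem bddAbove_norm_eval_numericalRange [FiniteDimensional ℂ E] (T : E →L[ℂ] E) (p : ℂ[X]) :
    BddAbove ((fun z => ‖p.eval z‖) '' T.numericalRange) :=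
  (T.isCompact_numericalRange.image (continuous_norm.comp p.continuous)).bddAbove

theorem crouzeixIneq_conj_iff (e : E ≃ₗᵢ[ℂ] F) (T : E →L[ℂ] E) :
    (e.toContinuousLinearEquiv.conjContinuousAlgEquiv T).CrouzeixIneq ↔ T.CrouzeixIneq := by
  simp only [CrouzeixIneq, aeval_algHom_apply, norm_conj, numericalRange_conj]

theorem crouzeixIneq_of_forall_span_pow_ne_top [FiniteDimensional ℂ E] {n : ℕ}
    (hE : finrank ℂ E = n + 1)
    (h : ∀ V : Submodule ℂ E, finrank ℂ V = n → ∀ C : V →L[ℂ] V, C.CrouzeixIneq) (T : E →L[ℂ] E)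
    (hT : ∀ x, Submodule.span ℂ (Set.range fun k : ℕ => (T ^ k) x) ≠ ⊤) : T.CrouzeixIneq := by
  intro p
  have hS : 0 ≤ ⨆ z ∈ T.numericalRange, ‖p.eval z‖ :=
    Real.iSup_nonneg fun _ => Real.iSup_nonneg fun _ => norm_nonneg _
  refine opNorm_le_bound _ (by positivity) fun x => ?_
  obtain ⟨V, hKV, hV⟩ := Submodule.exists_le_finrank_eq_of_ne_top hE (hT x)
  have hx : ∀ k, (T ^ k) x ∈ V := fun k => hKV (Submodule.subset_span ⟨k, rfl⟩)
  let v : V := ⟨x, by simpa using hx 0⟩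
  have hW : ⨆ z ∈ (T.compression V).numericalRange, ‖p.eval z‖ ≤
      ⨆ z ∈ T.numericalRange, ‖p.eval z‖ :=
    Real.biSup_le_biSup_of_subset (fun _ => norm_nonneg _) numericalRange_compression_subset
      (T.bddAbove_norm_eval_numericalRange p)
  calc ‖aeval T p x‖ = ‖aeval (T.compression V) p v‖ := by
        rw [← Submodule.norm_coe, compression_aeval_apply hx]
    _ ≤ ‖aeval (T.compression V) p‖ * ‖x‖ := le_opNorm _ _
    _ ≤ 2 * (⨆ z ∈ T.numericalRange, ‖p.eval z‖) * ‖x‖ := by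
        gcongr
        exact (h V hV _ p).trans (mul_le_mul_of_nonneg_left hW zero_le_two)

end ContinuousLinearMap

theorem matCLM_aeval {ι : Type} [Fintype ι] [DecidableEq ι] (A : Matrix ι ι ℂ) (p : ℂ[X]) :
    matCLM (aeval A p) = aeval (matCLM A) p :=
  (aeval_algHom_apply (Matrix.toEuclideanCLM (𝕜 := ℂ) (n := ι)).toAlgEquiv A p).symm

theorem numRange_eq_numericalRange {ι : Type} [Fintype ι] [DecidableEq ι] (A : Matrix ι ι ℂ) :
    numRange A = (matCLM A).numericalRange := by
  ext z
  constructor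
  · rintro ⟨x, hx, rfl⟩
    exact ⟨x, by simpa using hx, rfl⟩
  · rintro ⟨x, hx, rfl⟩
    exact ⟨x, by simpa using hx, rfl⟩

theorem crouzeixIneq_iff {ι : Type} [Fintype ι] [DecidableEq ι] (A : Matrix ι ι ℂ) :
    CrouzeixIneq A ↔ (matCLM A).CrouzeixIneq := by
  simp only [CrouzeixIneq, ContinuousLinearMap.CrouzeixIneq, matCLM_aeval,
    numRange_eq_numericalRange]

theorem matCyclic_of_span_eq_top {ι : Type} [Fintype ι] [DecidableEq ι] {A : Matrix ι ι ℂ}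
    {x : EuclideanSpace ℂ ι} (hx : Submodule.span ℂ (Set.range fun k : ℕ => (matCLM A ^ k) x) = ⊤) :
    MatCyclic A := by
  refine ⟨WithLp.ofLp x, ?_⟩
  have : (Set.range fun k : ℕ => (A ^ k).mulVec (WithLp.ofLp x)) =
      WithLp.linearEquiv 2 ℂ (ι → ℂ) '' Set.range fun k : ℕ => (matCLM A ^ k) x := by
    rw [← Set.range_comp]
    congr
    funext k
    simp [matCLM, ← map_pow]
  rw [this, ← LinearEquiv.coe_coe, Submodule.span_image, hx, Submodule.map_top, LinearEquiv.range]

theorem ContinuousLinearMap.crouzeixIneq_of_finrank_eq {V : Type*} [NormedAddCommGroup V]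
    [InnerProductSpace ℂ V] [FiniteDimensional ℂ V] {n : ℕ}
    (h : ∀ B : Matrix (Fin n) (Fin n) ℂ, _root_.CrouzeixIneq B) (hV : finrank ℂ V = n)
    (C : V →L[ℂ] V) :
    C.CrouzeixIneq := by
  let e := ((stdOrthonormalBasis ℂ V).reindex (finCongr hV)).repr
  obtain ⟨B, hB⟩ := (Matrix.toEuclideanCLM (𝕜 := ℂ)).surjective
    (e.toContinuousLinearEquiv.conjContinuousAlgEquiv C)
  rw [← crouzeixIneq_conj_iff e, ← hB]
  exact (crouzeixIneq_iff B).1 (h B)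

theorem crouzeix_noncyclic_succ_general {n : ℕ}
    (h : ∀ B : Matrix (Fin n) (Fin n) ℂ, CrouzeixIneq B)
    (A : Matrix (Fin (n + 1)) (Fin (n + 1)) ℂ) (hA : ¬ MatCyclic A) :
    CrouzeixIneq A := by
  rw [crouzeixIneq_iff]
  exact (matCLM A).crouzeixIneq_of_forall_span_pow_ne_top finrank_euclideanSpace_fin
    (fun V hV C => C.crouzeixIneq_of_finrank_eq h hV) fun x hx => hA (matCyclic_of_span_eq_top hx)

/-- If every `n × n` matrix satisfies the Crouzeix inequality, then every non-cyclic
`(n+1) × (n+1)` matrix satisfies the Crouzeix inequality. -/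
theorem crouzeix_noncyclic_succ {n : ℕ} (hn : 0 < n)
    (h : ∀ B : Matrix (Fin n) (Fin n) ℂ, CrouzeixIneq B)
    (A : Matrix (Fin (n + 1)) (Fin (n + 1)) ℂ) (hA : ¬ MatCyclic A) :
    CrouzeixIneq A :=
  crouzeix_noncyclic_succ_general h A hA
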